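/- arXiv:2509.24960 — 2 statements merged into one kernel-verified Lean document; each statement's English description precedes it below -/
import Mathlib

section
/- Let d ≥ 1, r ∈ [1,∞) and ρ0, ρ1 ∈ L^r(ℝ^{2d}, ℝ). Suppose (φ_n) is a sequence of bijections of ℝ^{2d} such that each φ_n and each φ_n^{-1} is measurable and preserves the Lebesgue measure, and suppose ρ0 ∘ φ_n → ρ1 in L^r as n → ∞. Then for all real numbers μ < ν, the Lebesgue measure of {x : μ < ρ1(x) < ν} equals the Lebesgue measure of {x : μ < ρ0(x) < ν}. -/
open MeasureTheory Real

noncomputable section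

/-- The phase space `T*ℝ^d = ℝ^d × ℝ^d` (positions `q` and momenta `p`),
identified with `ℝ^{2d}` with the sup norm and the Lebesgue (symplectic volume) measure. -/
abbrev Phase (d : ℕ) := (Fin d → ℝ) × (Fin d → ℝ)

/-- The Hamiltonian vector field of a function `H : Phase d → ℝ`:
`H⃗(q,p) = (∂_p H(q,p), −∂_q H(q,p))`. -/
def hamVF {d : ℕ} (H : Phase d → ℝ) (x : Phase d) : Phase d :=
  (fun i => fderiv ℝ H x (0, Pi.single i 1),
   fun i => -(fderiv ℝ H x (Pi.single i 1, 0)))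

/-- `φ` is the global flow of the (complete) vector field `X`. -/
def IsFlowOf {d : ℕ} (X : Phase d → Phase d) (φ : ℝ → Phase d → Phase d) : Prop :=
  (∀ x, φ 0 x = x) ∧ ∀ x t, HasDerivAt (fun s => φ s x) (X (φ t x)) t

/-- `Φ` is a smooth diffeomorphism of phase space. -/
def IsDiffeo {d : ℕ} (Φ : Phase d → Phase d) : Prop :=
  ContDiff ℝ (⊤ : ℕ∞) Φ ∧
    ∃ Ψ, ContDiff ℝ (⊤ : ℕ∞) Ψ ∧ Function.LeftInverse Ψ Φ ∧ Function.RightInverse Ψ Φ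

/-- `Φ` is a Hamiltonian diffeomorphism of `T*ℝ^d`: a smooth diffeomorphism which is the
time-1 flow map of a smooth time-dependent Hamiltonian whose non-autonomous Hamiltonian flow
is defined on `[0,1]` from every initial point. -/
def IsHamDiffeo {d : ℕ} (Φ : Phase d → Phase d) : Prop :=
  IsDiffeo Φ ∧
  ∃ (H : ℝ → Phase d → ℝ) (φ : ℝ → Phase d → Phase d),
    ContDiff ℝ (⊤ : ℕ∞) (fun z : ℝ × Phase d => H z.1 z.2) ∧
    (∀ x, φ 0 x = x) ∧
    (∀ x, ∀ t ∈ Set.Icc (0:ℝ) 1,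
      HasDerivWithinAt (fun s => φ s x) (hamVF (H t) (φ t x)) (Set.Icc (0:ℝ) 1) t) ∧
    Φ = φ 1

/-- `Φ` is the flow map from time `0` to time `τ` of the time-dependent Hamiltonian vector
field `H⃗_{u(t)}` for some piecewise constant control `u(·) : [0,τ] → U` (finitely many
pieces): i.e. `Φ` is a finite composition of flows of the autonomous fields `H⃗_{u_i}`
for nonnegative durations summing to `τ`. -/
def Reachable {d : ℕ} {U : Type*} (Ham : U → Phase d → ℝ) (τ : ℝ)
    (Φ : Phase d → Phase d) : Prop :=
  ∃ (n : ℕ) (dur : Fin n → ℝ) (u : Fin n → U) (φ : Fin n → ℝ → Phase d → Phase d),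
    (∀ i, 0 ≤ dur i) ∧ (∑ i, dur i) = τ ∧
    (∀ i, IsFlowOf (hamVF (Ham (u i))) (φ i)) ∧
    Φ = (List.ofFn (fun i => φ i (dur i))).foldl (fun g f => f ∘ g) id

/-- `‖Φ − Ψ‖_{C^ℓ(K)} < ε`: all iterated derivatives of the difference up to order `ℓ`
are smaller than `ε` on `K`. -/
def CloseCl {d : ℕ} (ℓ : ℕ) (K : Set (Phase d)) (ε : ℝ) (Φ Ψ : Phase d → Phase d) : Prop :=
  ∀ j ≤ ℓ, ∀ x ∈ K, ‖iteratedFDeriv ℝ j (fun y => Φ y - Ψ y) x‖ < ε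

/-- `Ψ ∈ R̄_st`: the diffeomorphism `Ψ` is small-time approximately reachable for the
control system with controlled Hamiltonians `Ham u`, `u ∈ U`. -/
def SmallTimeReachable {d : ℕ} {U : Type*} (Ham : U → Phase d → ℝ)
    (Ψ : Phase d → Phase d) : Prop :=
  ∀ ε > 0, ∀ K : Set (Phase d), IsCompact K → ∀ ℓ : ℕ,
    ∃ τ ∈ Set.Icc (0:ℝ) ε, ∃ Φ, Reachable Ham τ Φ ∧ CloseCl ℓ K ε Φ Ψ

/-- A function `f` with complete Hamiltonian vector field is STAR (small-time approximately
reachable) if its flow at every time `s ∈ ℝ` belongs to `R̄_st`. -/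
def IsSTAR {d : ℕ} {U : Type*} (Ham : U → Phase d → ℝ) (f : Phase d → ℝ) : Prop :=
  (∃ φ, IsFlowOf (hamVF f) φ) ∧
  ∀ φ, IsFlowOf (hamVF f) φ → ∀ s : ℝ, SmallTimeReachable Ham (φ s)

/-- The Poisson bracket `{f,g} = Σ_j (∂_{p_j} f ∂_{q_j} g − ∂_{q_j} f ∂_{p_j} g)`. -/
def poissonBracket {d : ℕ} (f g : Phase d → ℝ) : Phase d → ℝ :=
  fun x => ∑ j, (fderiv ℝ f x (0, Pi.single j 1) * fderiv ℝ g x (Pi.single j 1, 0)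
      - fderiv ℝ f x (Pi.single j 1, 0) * fderiv ℝ g x (0, Pi.single j 1))

/-- The mechanical Hamiltonian `H_u(q,p) = |p|²/2 + V_0(q) + Σ_j u_j V_j(q)`. -/
def mechHam {d m : ℕ} (V0 : (Fin d → ℝ) → ℝ) (V : Fin m → (Fin d → ℝ) → ℝ)
    (u : Fin m → ℝ) : Phase d → ℝ :=
  fun x => (∑ i, (x.2 i) ^ 2) / 2 + V0 x.1 + ∑ j, u j * V j x.1

/-- The Euclidean controlled Hamiltonian
`H_u(q,p) = |p|²/2 + V_0(q) + Σ_{j=1}^d u_j q_j + u_{d+1} e^{−|q|²/2}`,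
with control `u ∈ ℝ^d × ℝ ≃ ℝ^{d+1}`. -/
def eucHam {d : ℕ} (V0 : (Fin d → ℝ) → ℝ) (u : (Fin d → ℝ) × ℝ) : Phase d → ℝ :=
  fun x => (∑ i, (x.2 i) ^ 2) / 2 + V0 x.1 + (∑ j, u.1 j * x.1 j)
    + u.2 * Real.exp (-(∑ i, (x.1 i) ^ 2) / 2)

/-- The frequencies `k_1 = e_1, …, k_{d−1} = e_{d−1}, k_d = (1,…,1)`. -/
def kvec (d : ℕ) (j : Fin d) : Fin d → ℝ :=
  if (j : ℕ) < d - 1 then Pi.single j 1 else fun _ => 1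

/-- The torus controlled Hamiltonian (lifted to `ℝ^d × ℝ^d`)
`H_u(q,p) = |p|²/2 + V_0(q) + Σ_{j=1}^d (u_{2j−1} cos(k_j·q) + u_{2j} sin(k_j·q))`,
with control `u ∈ (ℝ²)^d ≃ ℝ^{2d}`. -/
def torusHam {d : ℕ} (V0 : (Fin d → ℝ) → ℝ) (u : Fin d → ℝ × ℝ) : Phase d → ℝ :=
  fun x => (∑ i, (x.2 i) ^ 2) / 2 + V0 x.1 +
    ∑ j, ((u j).1 * Real.cos (∑ i, kvec d j i * x.1 i) +
          (u j).2 * Real.sin (∑ i, kvec d j i * x.1 i))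

/-- The vertical shear `(q,p) ↦ (q, p − ∇f(q))`. -/
def vshear {d : ℕ} (f : (Fin d → ℝ) → ℝ) : Phase d → Phase d :=
  fun x => (x.1, fun i => x.2 i - fderiv ℝ f x.1 (Pi.single i 1))

/-- The horizontal shear `(q,p) ↦ (q + ∇g(p), p)`. -/
def hshear {d : ℕ} (g : (Fin d → ℝ) → ℝ) : Phase d → Phase d :=
  fun x => (fun i => x.1 i + fderiv ℝ g x.2 (Pi.single i 1), x.2)

/-- `M` is a mesh of size `h`: the closed sup-norm cubes `C̄(m_n,h)` cover `ℝ^{2d}` and the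
open cubes `C(m_n,h)` are pairwise disjoint. -/
def IsMesh {d : ℕ} (h : ℝ) (M : ℕ → Phase d) : Prop :=
  (∀ x : Phase d, ∃ n, ‖x - M n‖ ≤ h) ∧
  ∀ n ℓ : ℕ, n ≠ ℓ →
    Disjoint {x : Phase d | ‖x - M n‖ < h} {x : Phase d | ‖x - M ℓ‖ < h}

/-- `F` is a permutation of the mesh `M` of size `h`: a bijection translating every open
cube of the mesh onto another one. -/
def IsMeshPermutation {d : ℕ} (h : ℝ) (M : ℕ → Phase d) (F : Phase d → Phase d) : Prop :=
  Function.Bijective F ∧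
  ∀ n : ℕ, ∃ ℓ : ℕ, ∀ x : Phase d, ‖x - M n‖ < h → F x = x + (M ℓ - M n)

/-- The fundamental domain `Q = [0,2π)^d × ℝ^d` of `T*𝕋^d` in `ℝ^d × ℝ^d`. -/
def torusBlock (d : ℕ) : Set (Phase d) :=
  {x : Phase d | ∀ i, 0 ≤ x.1 i ∧ x.1 i < 2 * Real.pi}

/-- A torus density of class `L^r`: a measurable function on `ℝ^d × ℝ^d`, `2π`-periodic in
each position variable, with finite `L^r` norm on the fundamental domain `Q`. -/
def IsTorusDensity {d : ℕ} (p : ENNReal) (ρ : Phase d → ℝ) : Prop :=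
  Measurable ρ ∧
  (∀ (q : Fin d → ℝ) (pp : Fin d → ℝ) (k : Fin d → ℤ),
    ρ (fun i => q i + 2 * Real.pi * (k i), pp) = ρ (q, pp)) ∧
  eLpNorm ρ p (volume.restrict (torusBlock d)) < ⊤

end

/-!
A measure-preserving rearrangement does not change the distribution of `ρ0`, and `L^r`
convergence implies convergence in measure. If `F n → g` in measure, a point where `g` lies in
the shrunken interval `[a + δ, b - δ]` has `F n` in `(a, b)` up to a set of measure tending to
zero, and conversely; letting `δ → 0` recovers the open level sets by continuity from below.
-/

open Filter Set ProbabilityTheory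

theorem preimage_Icc_subset_preimage_Ioo_union {α : Type*} (f g : α → ℝ) (a b δ : ℝ) :
    f ⁻¹' Icc (a + δ) (b - δ) ⊆
      g ⁻¹' Ioo a b ∪ {x | ENNReal.ofReal δ ≤ edist (g x) (f x)} := by
  intro x ⟨hxa, hxb⟩
  by_cases hfar : ENNReal.ofReal δ ≤ edist (g x) (f x)
  · exact Or.inr hfar
  · have hclose := abs_sub_lt_iff.mp (edist_lt_ofReal.mp (not_le.mp hfar))
    exact Or.inl ⟨by linarith, by linarith⟩

theorem iUnion_Icc_add_one_div_sub_one_div (a b : ℝ) :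
    ⋃ n : ℕ, Icc (a + 1 / (n + 1)) (b - 1 / (n + 1)) = Ioo a b := by
  ext y
  simp only [mem_iUnion, mem_Icc, mem_Ioo]
  constructor
  · rintro ⟨n, hn₁, hn₂⟩
    have : (0 : ℝ) < 1 / (n + 1) := Nat.one_div_pos_of_nat
    exact ⟨by linarith, by linarith⟩
  · rintro ⟨hay, hyb⟩
    obtain ⟨n, hn⟩ := exists_nat_one_div_lt (lt_min (sub_pos.mpr hay) (sub_pos.mpr hyb))
    exact ⟨n, by linarith [min_le_left (y - a) (b - y)],
      by linarith [min_le_right (y - a) (b - y)]⟩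

namespace MeasureTheory

variable {α : Type*} [MeasurableSpace α] {μ : Measure α}

theorem MeasurePreserving.identDistrib_comp {β γ : Type*} [MeasurableSpace β]
    [MeasurableSpace γ] {ν : Measure β} {f : α → β} (hf : MeasurePreserving f μ ν) {g : β → γ}
    (hg : AEMeasurable g ν) : IdentDistrib (g ∘ f) g μ ν where
  aemeasurable_fst := hg.comp_quasiMeasurePreserving hf.quasiMeasurePreserving
  aemeasurable_snd := hg
  map_eq := by
    rw [← AEMeasurable.map_map_of_aemeasurable (hf.map_eq ▸ hg) hf.aemeasurable, hf.map_eq]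

theorem measure_preimage_Ioo_le_of_forall_Icc {f : α → ℝ} {a b : ℝ} {c : ENNReal}
    (h : ∀ δ > 0, μ (f ⁻¹' Icc (a + δ) (b - δ)) ≤ c) : μ (f ⁻¹' Ioo a b) ≤ c := by
  have hmono : Monotone fun n : ℕ => f ⁻¹' Icc (a + 1 / (n + 1)) (b - 1 / (n + 1)) :=
    fun m n hmn => preimage_mono (Icc_subset_Icc (by gcongr) (by gcongr))
  rw [← iUnion_Icc_add_one_div_sub_one_div, preimage_iUnion, hmono.measure_iUnion]
  exact iSup_le fun n => h _ Nat.one_div_pos_of_nat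

theorem TendstoInMeasure.measure_le_of_le_add {ι E : Type*} [EDist E] {l : Filter ι} [l.NeBot]
    {F : ι → α → E} {g : α → E} (hF : TendstoInMeasure μ F l g) {ε : ENNReal} (hε : 0 < ε)
    {s : Set α} {c : ENNReal} (h : ∀ i, μ s ≤ c + μ {x | ε ≤ edist (F i x) (g x)}) :
    μ s ≤ c :=
  ge_of_tendsto' (by simpa using (hF ε hε).const_add c) h

theorem TendstoInMeasure.measure_preimage_Ioo_eq {ι : Type*} {l : Filter ι} [l.NeBot]
    {F : ι → α → ℝ} {f g : α → ℝ} (hF : ∀ i, IdentDistrib (F i) f μ μ)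
    (hlim : TendstoInMeasure μ F l g) (a b : ℝ) :
    μ (g ⁻¹' Ioo a b) = μ (f ⁻¹' Ioo a b) := by
  apply le_antisymm <;> refine measure_preimage_Ioo_le_of_forall_Icc fun δ hδ =>
    hlim.measure_le_of_le_add (ENNReal.ofReal_pos.mpr hδ) fun i => ?_
  · calc μ (g ⁻¹' Icc (a + δ) (b - δ))
        ≤ μ (F i ⁻¹' Ioo a b ∪ {x | ENNReal.ofReal δ ≤ edist (F i x) (g x)}) :=
          measure_mono (preimage_Icc_subset_preimage_Ioo_union g (F i) a b δ)
      _ ≤ μ (F i ⁻¹' Ioo a b) + μ {x | ENNReal.ofReal δ ≤ edist (F i x) (g x)} :=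
          measure_union_le _ _
      _ = μ (f ⁻¹' Ioo a b) + μ {x | ENNReal.ofReal δ ≤ edist (F i x) (g x)} := by
          rw [(hF i).measure_mem_eq measurableSet_Ioo]
  · calc μ (f ⁻¹' Icc (a + δ) (b - δ))
        = μ (F i ⁻¹' Icc (a + δ) (b - δ)) := ((hF i).measure_mem_eq measurableSet_Icc).symm
      _ ≤ μ (g ⁻¹' Ioo a b ∪ {x | ENNReal.ofReal δ ≤ edist (g x) (F i x)}) :=
          measure_mono (preimage_Icc_subset_preimage_Ioo_union (F i) g a b δ)
      _ ≤ μ (g ⁻¹' Ioo a b) + μ {x | ENNReal.ofReal δ ≤ edist (F i x) (g x)} := by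
          simp_rw [edist_comm (g _)]
          exact measure_union_le _ _

end MeasureTheory

theorem level_sets_of_Lr_limit_of_measurePreserving_general
    (d : ℕ) (r : ℝ) (hr : 1 ≤ r) (ρ0 ρ1 : Phase d → ℝ)
    (hρ0 : MemLp ρ0 (ENNReal.ofReal r) volume)
    (hρ1 : MemLp ρ1 (ENNReal.ofReal r) volume)
    (φ : ℕ → Phase d → Phase d)
    (hmp : ∀ n, MeasurePreserving (φ n) volume volume)
    (hconv : Filter.Tendsto
      (fun n => eLpNorm (fun x => ρ0 (φ n x) - ρ1 x) (ENNReal.ofReal r) volume)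
      Filter.atTop (nhds 0)) :
    ∀ μ ν : ℝ, μ < ν →
      volume {x : Phase d | μ < ρ1 x ∧ ρ1 x < ν}
        = volume {x : Phase d | μ < ρ0 x ∧ ρ0 x < ν} := by
  intro μ ν _
  have hr₀ : ENNReal.ofReal r ≠ 0 := by simpa using zero_lt_one.trans_le hr
  have hlim : TendstoInMeasure volume (fun n x => ρ0 (φ n x)) atTop ρ1 :=
    tendstoInMeasure_of_tendsto_eLpNorm hr₀
      (fun n => hρ0.aestronglyMeasurable.comp_measurePreserving (hmp n))
      hρ1.aestronglyMeasurable hconv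
  exact hlim.measure_preimage_Ioo_eq
    (fun n => (hmp n).identDistrib_comp hρ0.aestronglyMeasurable.aemeasurable) μ ν

/-- **Inclusion `closure(O(ρ0)) ⊆ L(ρ0)`.**
If `ρ0 ∘ φ_n → ρ1` in `L^r` for a sequence of measure-preserving bijections `φ_n` of
`ℝ^{2d}` (with measure-preserving measurable inverses), then all strict level sets
`{μ < ρ1 < ν}` of `ρ1` have the same Lebesgue measure as those of `ρ0`. -/
theorem level_sets_of_Lr_limit_of_measurePreserving
    (d : ℕ) (hd : 1 ≤ d) (r : ℝ) (hr : 1 ≤ r) (ρ0 ρ1 : Phase d → ℝ)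
    (hρ0 : MemLp ρ0 (ENNReal.ofReal r) volume)
    (hρ1 : MemLp ρ1 (ENNReal.ofReal r) volume)
    (φ : ℕ → Phase d → Phase d)
    (hbij : ∀ n, Function.Bijective (φ n))
    (hmp : ∀ n, MeasurePreserving (φ n) volume volume)
    (hmpinv : ∀ n, MeasurePreserving (Function.invFun (φ n)) volume volume)
    (hconv : Filter.Tendsto
      (fun n => eLpNorm (fun x => ρ0 (φ n x) - ρ1 x) (ENNReal.ofReal r) volume)
      Filter.atTop (nhds 0)) :
    ∀ μ ν : ℝ, μ < ν →
      volume {x : Phase d | μ < ρ1 x ∧ ρ1 x < ν}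
        = volume {x : Phase d | μ < ρ0 x ∧ ρ0 x < ν} :=
  level_sets_of_Lr_limit_of_measurePreserving_general d r hr ρ0 ρ1 hρ0 hρ1 φ hmp hconv
end

section
/- Consider the control system on T*ℝ^d = ℝ^d × ℝ^d with Hamiltonians H_u(q,p) = |p|²/2 + u|q|²/2, scalar control u ∈ ℝ. Then the function |p|² is STAR: for every s ∈ ℝ (including s < 0) the map (q,p) ↦ (q + 2sp, p), which is the time-s flow of the Hamiltonian vector field of |p|², is small-time approximately reachable. -/
open MeasureTheory Real

/-!
Every controlled field is linear and acts in the same way on each plane `(q_i, p_i)`, so its flows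
are `2 × 2` matrices: for `u = 0` the shears `[[1, t], [0, 1]]`, and for `u = ω²` the rotations
along ellipses of period `2π/ω`. A three-quarter turn followed by a quarter turn at another
frequency yields `diag(μ, 1/μ)`, and one more quarter turn yields `J = [[0, 1], [-1, 0]]`, all in
time `O(1/ω)`, hence in arbitrarily small time. Conjugating the short shear by `b/ω²` with
`diag(ω, 1/ω)` gives the shear by `b ≥ 0`; conjugating by `J` gives the lower shears
`L_c = [[1, 0], [c, 1]]`, `c ≤ 0`; and for `b < 0` the shear by `b` is `J² L_c S L_c` with
`c = 2/b` and `S` the shear by `-b`. The time-`s` flow of `|p|²` is the shear by `2s`, and it is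
the only flow because the field is linear, hence Lipschitz.
-/

open Filter

theorem hasFDerivAt_sum_sq_comp {E ι : Type*} [NormedAddCommGroup E] [NormedSpace ℝ E]
    [Fintype ι] (L : E →L[ℝ] ι → ℝ) (x : E) :
    HasFDerivAt (fun y => ∑ i, (L y i) ^ 2)
      (∑ i, (2 * L x i) • (ContinuousLinearMap.proj i).comp L) x :=
  HasFDerivAt.fun_sum fun i _ => by
    simpa [Function.comp_def] using (hasDerivAt_pow 2 (L x i)).comp_hasFDerivAt x
      ((ContinuousLinearMap.proj i).comp L).hasFDerivAt

theorem IsFlowOf.unique {d : ℕ} {X : Phase d → Phase d} {K : NNReal} (hX : LipschitzWith K X)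
    {φ ψ : ℝ → Phase d → Phase d} (hφ : IsFlowOf X φ) (hψ : IsFlowOf X ψ) : φ = ψ := by
  funext s x
  have := ODE_solution_unique_univ (v := fun _ => X) (s := fun _ => Set.univ) (t₀ := 0)
    (fun _ => hX.lipschitzOnWith) (fun t => ⟨hφ.2 x t, trivial⟩) (fun t => ⟨hψ.2 x t, trivial⟩)
    (by rw [hφ.1, hψ.1])
  exact congrFun this s

theorem List.foldl_comp_eq_comp {α : Type*} (L : List (α → α)) (g : α → α) :
    L.foldl (fun g f => f ∘ g) g = L.foldl (fun g f => f ∘ g) id ∘ g := by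
  induction L generalizing g with
  | nil => rfl
  | cons f L ih => rw [List.foldl_cons, List.foldl_cons, ih (f ∘ g), ih (f ∘ id)]; rfl

theorem div_sq_le_div {C ω : ℝ} (hC : 0 ≤ C) (hω : 1 ≤ ω) : C / ω ^ 2 ≤ C / ω :=
  div_le_div_of_nonneg_left hC (by positivity) (by nlinarith)

section LinearMaps

variable {d : ℕ}

/-- The matrix `[[a, b], [c, e]]` acting on `T*ℝ^d` as `(q, p) ↦ (a q + b p, c q + e p)`. -/
def linMap (A : Matrix (Fin 2) (Fin 2) ℝ) : Phase d →L[ℝ] Phase d :=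
  ContinuousLinearMap.prod
    (A 0 0 • ContinuousLinearMap.fst ℝ _ _ + A 0 1 • ContinuousLinearMap.snd ℝ _ _)
    (A 1 0 • ContinuousLinearMap.fst ℝ _ _ + A 1 1 • ContinuousLinearMap.snd ℝ _ _)

@[simp]
theorem linMap_apply (A : Matrix (Fin 2) (Fin 2) ℝ) (x : Phase d) :
    linMap A x = (A 0 0 • x.1 + A 0 1 • x.2, A 1 0 • x.1 + A 1 1 • x.2) := rfl

theorem linMap_one : (linMap 1 : Phase d →L[ℝ] Phase d) = ContinuousLinearMap.id ℝ _ := by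
  ext x <;> simp

theorem linMap_mul (A B : Matrix (Fin 2) (Fin 2) ℝ) :
    (linMap (A * B) : Phase d →L[ℝ] Phase d) = (linMap A).comp (linMap B) := by
  ext x i <;> simp [Matrix.mul_apply, Fin.sum_univ_two] <;> ring

theorem isFlowOf_linMap {A : Matrix (Fin 2) (Fin 2) ℝ} {M : ℝ → Matrix (Fin 2) (Fin 2) ℝ}
    (h0 : M 0 = 1) (hM : ∀ i j t, HasDerivAt (fun t => M t i j) ((A * M t) i j) t) :
    IsFlowOf (linMap A : Phase d → Phase d) (fun t => linMap (M t)) := by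
  refine ⟨fun x => by simp [h0], fun x t => ?_⟩
  rw [← ContinuousLinearMap.comp_apply, ← linMap_mul, linMap_apply]
  exact (((hM 0 0 t).smul_const x.1).add ((hM 0 1 t).smul_const x.2)).prodMk
    (((hM 1 0 t).smul_const x.1).add ((hM 1 1 t).smul_const x.2))

end LinearMaps

section QuadraticHamiltonians

variable {d : ℕ}

def quadHam (d : ℕ) (α β : ℝ) : Phase d → ℝ :=
  fun x => α * ∑ i, (x.2 i) ^ 2 + β * ∑ i, (x.1 i) ^ 2

theorem hamVF_quadHam (α β : ℝ) :
    hamVF (quadHam d α β) = linMap !![0, 2 * α; -(2 * β), 0] := by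
  funext x
  have h : HasFDerivAt (quadHam d α β) _ x :=
    (((hasFDerivAt_sum_sq_comp (ContinuousLinearMap.snd ℝ (Fin d → ℝ) (Fin d → ℝ)) x).const_mul
      α).fun_add
    ((hasFDerivAt_sum_sq_comp (ContinuousLinearMap.fst ℝ (Fin d → ℝ) (Fin d → ℝ)) x).const_mul β))
  rw [hamVF, h.fderiv]
  ext i <;> simp [Pi.single_apply] <;> ring

theorem isFlowOf_quadHam_shear (α : ℝ) :
    IsFlowOf (hamVF (quadHam d α 0)) (fun t => linMap !![1, 2 * α * t; 0, 1]) := by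
  rw [hamVF_quadHam]
  refine isFlowOf_linMap (by simp [Matrix.one_fin_two]) fun i j t => ?_
  fin_cases i <;> fin_cases j <;> simp
  · exact hasDerivAt_const t 1
  · simpa using (hasDerivAt_id t).const_mul (2 * α)
  · exact hasDerivAt_const t 0
  · exact hasDerivAt_const t 1

end QuadraticHamiltonians

section Reachability

variable {d : ℕ} {U : Type*} {Ham : U → Phase d → ℝ}

theorem reachable_zero_id : Reachable Ham 0 (id : Phase d → Phase d) :=
  ⟨0, ![], ![], ![], by simp, by simp, by simp, by simp⟩

theorem IsFlowOf.reachable {u : U} {φ : ℝ → Phase d → Phase d}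
    (hφ : IsFlowOf (hamVF (Ham u)) φ) {t : ℝ} (ht : 0 ≤ t) : Reachable Ham t (φ t) :=
  ⟨1, fun _ => t, fun _ => u, fun _ => φ, fun _ => ht, by simp, fun _ => hφ, rfl⟩

theorem Reachable.comp {τ₁ τ₂ : ℝ} {Φ₁ Φ₂ : Phase d → Phase d}
    (h₁ : Reachable Ham τ₁ Φ₁) (h₂ : Reachable Ham τ₂ Φ₂) :
    Reachable Ham (τ₁ + τ₂) (Φ₂ ∘ Φ₁) := by
  obtain ⟨n₁, dur₁, u₁, φ₁, hdur₁, rfl, hφ₁, rfl⟩ := h₁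
  obtain ⟨n₂, dur₂, u₂, φ₂, hdur₂, rfl, hφ₂, rfl⟩ := h₂
  refine ⟨n₁ + n₂, Fin.append dur₁ dur₂, Fin.append u₁ u₂, Fin.append φ₁ φ₂,
    Fin.addCases (by simpa using hdur₁) (by simpa using hdur₂), by simp [Fin.sum_univ_add],
    Fin.addCases (by simpa using hφ₁) (by simpa using hφ₂), ?_⟩
  rw [List.ofFn_add, List.foldl_append]
  simpa using (List.foldl_comp_eq_comp _ _).symm

theorem Reachable.linMap_mul {τ₁ τ₂ : ℝ} {A B : Matrix (Fin 2) (Fin 2) ℝ}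
    (hB : Reachable Ham τ₁ (linMap B)) (hA : Reachable Ham τ₂ (linMap A)) :
    Reachable Ham (τ₁ + τ₂) (linMap (A * B)) := by
  rw [_root_.linMap_mul, ContinuousLinearMap.coe_comp]
  exact hB.comp hA

/-- The matrices `A` such that `linMap A` is reachable exactly, not only approximately, in
arbitrarily small time. -/
def smallTimeMatrices (Ham : U → Phase d → ℝ) : Submonoid (Matrix (Fin 2) (Fin 2) ℝ) where
  carrier := {A | ∀ δ > 0, ∃ τ ∈ Set.Icc (0 : ℝ) δ, Reachable Ham τ (linMap A)}
  one_mem' δ hδ := ⟨0, ⟨le_rfl, hδ.le⟩, by simpa [linMap_one] using reachable_zero_id⟩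
  mul_mem' {A B} hA hB δ hδ := by
    obtain ⟨τA, ⟨hτA0, hτA⟩, hrA⟩ := hA (δ / 2) (by positivity)
    obtain ⟨τB, ⟨hτB0, hτB⟩, hrB⟩ := hB (δ / 2) (by positivity)
    exact ⟨τB + τA, ⟨by positivity, by linarith⟩, hrB.linMap_mul hrA⟩

theorem smallTimeReachable_of_mem_smallTimeMatrices {A : Matrix (Fin 2) (Fin 2) ℝ}
    (hA : A ∈ smallTimeMatrices Ham) : SmallTimeReachable Ham (linMap A) := by
  intro ε hε K _ ℓ
  obtain ⟨τ, hτ, hr⟩ := hA ε hε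
  refine ⟨τ, hτ, _, hr, fun j _ x _ => ?_⟩
  simpa [iteratedFDeriv_fun_zero] using hε

theorem mem_smallTimeMatrices_of_reachable_div {A : Matrix (Fin 2) (Fin 2) ℝ} (C : ℝ)
    (h : ∀ ω ≥ 1, ∃ τ, Reachable Ham τ (linMap A) ∧ 0 ≤ τ ∧ τ ≤ C / ω) :
    A ∈ smallTimeMatrices Ham := by
  intro δ hδ
  have hsmall : ∀ᶠ ω in atTop, C / ω ≤ δ :=
    (tendsto_const_nhds.div_atTop tendsto_id).eventually (ge_mem_nhds hδ)
  obtain ⟨ω, hω, hCω⟩ := ((eventually_ge_atTop 1).and hsmall).exists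
  obtain ⟨τ, hr, hτ0, hτ⟩ := h ω hω
  exact ⟨τ, ⟨hτ0, hτ.trans hCω⟩, hr⟩

end Reachability

section Oscillator

variable {d : ℕ}

noncomputable def oscillatorHam (d : ℕ) (u : ℝ) : Phase d → ℝ := quadHam d (1 / 2) (u / 2)

theorem isFlowOf_oscillatorHam_sq {ω : ℝ} (hω : ω ≠ 0) :
    IsFlowOf (hamVF (oscillatorHam d (ω ^ 2)))
      (fun t => linMap !![cos (ω * t), sin (ω * t) / ω; -(ω * sin (ω * t)), cos (ω * t)]) := by
  rw [oscillatorHam, hamVF_quadHam]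
  refine isFlowOf_linMap (by simp [Matrix.one_fin_two]) fun i j t => ?_
  have hcos : HasDerivAt (fun t => cos (ω * t)) (-(ω * sin (ω * t))) t := by
    simpa [mul_comm] using ((hasDerivAt_id t).const_mul ω).cos
  have hsin : HasDerivAt (fun t => sin (ω * t)) (ω * cos (ω * t)) t := by
    simpa [mul_comm] using ((hasDerivAt_id t).const_mul ω).sin
  fin_cases i <;> fin_cases j <;> simp
  · exact hcos
  · exact (hsin.div_const ω).congr_deriv (by field_simp)
  · exact (hsin.const_mul ω).neg.congr_deriv (by ring)
  · exact hcos.congr_deriv (by field_simp)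

theorem reachable_shear {t : ℝ} (ht : 0 ≤ t) :
    Reachable (oscillatorHam d) t (linMap !![1, t; 0, 1]) := by
  have hflow : IsFlowOf (hamVF (oscillatorHam d 0)) fun t => linMap !![1, t; 0, 1] := by
    simpa [oscillatorHam] using isFlowOf_quadHam_shear (d := d) (1 / 2)
  exact hflow.reachable ht

theorem reachable_rotation {ω θ : ℝ} (hω : 0 < ω) (hθ : 0 ≤ θ) :
    Reachable (oscillatorHam d) (θ / ω) (linMap !![cos θ, sin θ / ω; -(ω * sin θ), cos θ]) := by
  simpa [mul_div_cancel₀ θ hω.ne'] using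
    (isFlowOf_oscillatorHam_sq (d := d) hω.ne').reachable (t := θ / ω) (by positivity)

theorem reachable_diagonal {a b : ℝ} (ha : 0 < a) (hb : 0 < b) :
    Reachable (oscillatorHam d) (3 * π / 2 / b + π / 2 / a) (linMap !![b / a, 0; 0, a / b]) := by
  have hquarter := reachable_rotation (d := d) ha (θ := π / 2) (by positivity)
  have hthree := reachable_rotation (d := d) hb (θ := 3 * π / 2) (by positivity)
  have h3 : sin (3 * π / 2) = -1 ∧ cos (3 * π / 2) = 0 := by
    rw [show 3 * π / 2 = π / 2 + π by ring, sin_add_pi, cos_add_pi]; simp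
  convert hthree.linMap_mul hquarter using 3
  simp [h3, field]

theorem quarterTurn_mem : !![0, 1; -1, 0] ∈ smallTimeMatrices (oscillatorHam d) := by
  refine mem_smallTimeMatrices_of_reachable_div (5 * π / 2) fun ω hω => ?_
  have hω0 : 0 < ω := by linarith
  have hrot := reachable_rotation (d := d) hω0 (θ := π / 2) (by positivity)
  have hdiag := reachable_diagonal (d := d) hω0 (pow_pos hω0 2)
  refine ⟨_, by convert hrot.linMap_mul hdiag using 3; simp [field], by positivity, ?_⟩
  have := div_sq_le_div (C := 3 * π / 2) (by positivity) hω
  have : 5 * π / 2 / ω = π / 2 / ω + (3 * π / 2 / ω + π / 2 / ω) := by ring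
  linarith

theorem shear_mem_of_nonneg {b : ℝ} (hb : 0 ≤ b) :
    !![1, b; 0, 1] ∈ smallTimeMatrices (oscillatorHam d) := by
  refine mem_smallTimeMatrices_of_reachable_div (4 * π + b) fun ω hω => ?_
  have hω0 : 0 < ω := by linarith
  have hshrink := reachable_diagonal (d := d) (pow_pos hω0 2) hω0
  have hshear := reachable_shear (d := d) (t := b / ω ^ 2) (by positivity)
  have hstretch := reachable_diagonal (d := d) hω0 (pow_pos hω0 2)
  refine ⟨_, by convert (hshrink.linMap_mul hshear).linMap_mul hstretch using 3; simp [field],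
    by positivity, ?_⟩
  have := div_sq_le_div (C := π / 2) (by positivity) hω
  have := div_sq_le_div (C := 3 * π / 2) (by positivity) hω
  have := div_sq_le_div hb hω
  have : (4 * π + b) / ω = 3 * π / 2 / ω + π / 2 / ω + b / ω + (3 * π / 2 / ω + π / 2 / ω) := by
    ring
  linarith

theorem lowerShear_mem_of_nonpos {c : ℝ} (hc : c ≤ 0) :
    !![1, 0; c, 1] ∈ smallTimeMatrices (oscillatorHam d) := by
  have h : !![1, 0; c, 1] = !![0, 1; -1, 0] * !![1, -c; 0, 1] * !![0, 1; -1, 0] ^ 3 := by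
    simp [pow_succ]
  rw [h]
  exact mul_mem (mul_mem quarterTurn_mem (shear_mem_of_nonneg (by linarith)))
    (pow_mem quarterTurn_mem 3)

theorem shear_mem (b : ℝ) : !![1, b; 0, 1] ∈ smallTimeMatrices (oscillatorHam d) := by
  rcases le_or_gt 0 b with hb | hb
  · exact shear_mem_of_nonneg hb
  have h : !![1, b; 0, 1] =
      !![0, 1; -1, 0] ^ 2 * !![1, 0; 2 / b, 1] * !![1, -b; 0, 1] * !![1, 0; 2 / b, 1] := by
    simp [sq, field, hb.ne]
    norm_num
  have hlower := lowerShear_mem_of_nonpos (d := d) (c := 2 / b)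
    (div_nonpos_of_nonneg_of_nonpos zero_le_two hb.le)
  rw [h]
  exact mul_mem (mul_mem (mul_mem (pow_mem quarterTurn_mem 2) hlower)
    (shear_mem_of_nonneg (by linarith))) hlower

end Oscillator

/-- **Proposition (the kinetic energy `|p|²` is STAR for the harmonic oscillator system).**
For the control system on `T*ℝ^d` with Hamiltonians `H_u(q,p) = |p|²/2 + u|q|²/2`,
`u ∈ ℝ`, the function `|p|²` is STAR: for every `s ∈ ℝ` (including `s < 0`) the map
`(q,p) ↦ (q + 2sp, p)`, the time-`s` flow of the Hamiltonian vector field of `|p|²`,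
is small-time approximately reachable. -/
theorem kinetic_energy_star_quadratic
    (d : ℕ) :
    IsSTAR (fun (u : ℝ) (x : Phase d) =>
        (∑ i, (x.2 i) ^ 2) / 2 + u * ((∑ i, (x.1 i) ^ 2) / 2))
      (fun x : Phase d => ∑ i, (x.2 i) ^ 2) ∧
    ∀ s : ℝ, SmallTimeReachable
      (fun (u : ℝ) (x : Phase d) =>
        (∑ i, (x.2 i) ^ 2) / 2 + u * ((∑ i, (x.1 i) ^ 2) / 2))
      (fun x : Phase d => (fun i => x.1 i + 2 * s * x.2 i, x.2)) := by
  have hHam : (fun (u : ℝ) (x : Phase d) =>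
      (∑ i, (x.2 i) ^ 2) / 2 + u * ((∑ i, (x.1 i) ^ 2) / 2)) = oscillatorHam d := by
    funext u x; simp only [oscillatorHam, quadHam]; ring
  have hkin : (fun x : Phase d => ∑ i, (x.2 i) ^ 2) = quadHam d 1 0 := by
    funext x; simp [quadHam]
  have hflow : IsFlowOf (hamVF (quadHam d 1 0)) (fun s => linMap !![1, 2 * s; 0, 1]) := by
    simpa using isFlowOf_quadHam_shear (d := d) 1
  have hshear (s : ℝ) : (fun x : Phase d => (fun i => x.1 i + 2 * s * x.2 i, x.2)) =
      linMap !![1, 2 * s; 0, 1] := by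
    funext x; ext i <;> simp
  have hreach (s : ℝ) := smallTimeReachable_of_mem_smallTimeMatrices (shear_mem (d := d) (2 * s))
  rw [hHam, hkin]
  refine ⟨⟨⟨_, hflow⟩, fun φ hφ s => ?_⟩, fun s => hshear s ▸ hreach s⟩
  rw [hφ.unique (by rw [hamVF_quadHam]; exact (linMap _).lipschitz) hflow]
  exact hreach s
end
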